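/- (Coefficient bound for the k-sender twirl, nonzero index.) Let d₀, …, d_{k−1} be reals with d_i ≥ 2 for all i, and let w: {0,1}^k → ℝ≥0 satisfy w_b / d_i ≤ w_{b⊕e_i} ≤ d_i · w_b for every b ∈ {0,1}^k and every i, where e_i flips the i-th bit. Suppose α: {0,1}^k → ℝ solves the linear system Σ_{a} K_{b,a} α_a = (∏_i d_i)² · w_b for all b, where K_{b,a} := (∏_i d_i) · ∏_i d_i^{¬(b_i⊕a_i)}. Then for every a ≠ 0^k: α_a ≤ 2^k · (∏_i d_i² / ∏_i (d_i²−1)) · w_a. -/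

import Mathlib

open scoped Kronecker ComplexOrder
open MeasureTheory Matrix

noncomputable section

namespace QIT

section UnitaryTopology

variable (n : Type*) [Fintype n] [DecidableEq n]

instance : MeasurableSpace (Matrix.unitaryGroup n ℂ) := borel _
instance : BorelSpace (Matrix.unitaryGroup n ℂ) := ⟨rfl⟩

instance : IsTopologicalGroup (Matrix.unitaryGroup n ℂ) where
  continuous_mul := by
    apply Continuous.subtype_mk
    exact Continuous.matrix_mul (continuous_subtype_val.comp continuous_fst)
      (continuous_subtype_val.comp continuous_snd)
  continuous_inv := by
    have h : Continuous fun U : Matrix.unitaryGroup n ℂ => star U :=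
      Continuous.subtype_mk (continuous_star.comp continuous_subtype_val) _
    simpa [← Unitary.star_eq_inv] using h

instance : CompactSpace (Matrix.unitaryGroup n ℂ) := by
  apply isCompact_iff_compactSpace.mp
  have hclosed : IsClosed ((Matrix.unitaryGroup n ℂ : Set (Matrix n n ℂ))) := by
    have h1 : IsClosed {M : Matrix n n ℂ | star M * M = 1} :=
      isClosed_eq (Continuous.matrix_mul continuous_star continuous_id) continuous_const
    have h2 : IsClosed {M : Matrix n n ℂ | M * star M = 1} :=
      isClosed_eq (Continuous.matrix_mul continuous_id continuous_star) continuous_const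
    have heq : (Matrix.unitaryGroup n ℂ : Set (Matrix n n ℂ))
        = {M | star M * M = 1} ∩ {M | M * star M = 1} := by
      ext M; exact Unitary.mem_iff
    rw [heq]; exact h1.inter h2
  have hsub : (Matrix.unitaryGroup n ℂ : Set (Matrix n n ℂ)) ⊆
      Set.univ.pi fun _ : n => Set.univ.pi fun _ : n => Metric.closedBall (0 : ℂ) 1 := by
    intro U hU
    erw [Set.mem_pi]
    intro i _
    rw [Set.mem_pi]
    intro j _
    rw [Metric.mem_closedBall, dist_zero_right]
    exact entry_norm_bound_of_unitary hU i j
  exact IsCompact.of_isClosed_subset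
    (isCompact_univ_pi fun _ => isCompact_univ_pi fun _ => isCompact_closedBall _ _)
    hclosed hsub

/-- The Haar probability measure on the unitary group. -/
def haarU : Measure (Matrix.unitaryGroup n ℂ) :=
  Measure.haarMeasure ⟨⟨Set.univ, isCompact_univ⟩, by simp⟩

end UnitaryTopology


section Defs

/-- Entrywise (Bochner) integral of a matrix-valued function. -/
def mInt {G : Type*} [MeasurableSpace G] (mu : Measure G) {m : Type*}
    (f : G → Matrix m m ℂ) : Matrix m m ℂ :=
  fun i j => ∫ U, f U i j ∂mu

/-- Partial trace over the first tensor factor. -/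
def ptL {A B : Type*} [Fintype A] (M : Matrix (A × B) (A × B) ℂ) : Matrix B B ℂ :=
  fun i j => ∑ a, M (a, i) (a, j)

/-- Partial trace over the second tensor factor. -/
def ptR {A B : Type*} [Fintype B] (M : Matrix (A × B) (A × B) ℂ) : Matrix A A ℂ :=
  fun i j => ∑ b, M (i, b) (j, b)

/-- Extension `T ⊗ id` of a superoperator to an additional tensor factor. -/
def matExt {A E R : Type*} (T : Matrix A A ℂ → Matrix E E ℂ)
    (M : Matrix (A × R) (A × R) ℂ) : Matrix (E × R) (E × R) ℂ :=
  fun p q => T (fun a b => M (a, p.2) (b, q.2)) p.1 q.1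

/-- Linearity of a superoperator. -/
def IsLinMap {A E : Type*} (T : Matrix A A ℂ → Matrix E E ℂ) : Prop :=
  ∀ (c : ℂ) (M N : Matrix A A ℂ), T (c • M + N) = c • T M + T N

/-- Complete positivity of a superoperator: it is linear and all its extensions by
finite-dimensional identities preserve positive semidefiniteness. -/
def IsCPMap {A E : Type*} [Fintype A] [Fintype E] (T : Matrix A A ℂ → Matrix E E ℂ) : Prop :=
  IsLinMap T ∧ ∀ (n : ℕ) (M : Matrix (A × Fin n) (A × Fin n) ℂ),
    M.PosSemidef → (matExt T M).PosSemidef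

/-- Trace preservation. -/
def IsTPMap {A E : Type*} [Fintype A] [Fintype E] (T : Matrix A A ℂ → Matrix E E ℂ) : Prop :=
  ∀ M : Matrix A A ℂ, (T M).trace = M.trace

/-- Spectral (Moore–Penrose) real power of a Hermitian matrix: the eigenvalue `λ` is mapped to
`λ ^ r` if `λ ≠ 0`, and to `0` otherwise.  Junk value `0` on non-Hermitian input. -/
def mpow {n : Type*} [Fintype n] [DecidableEq n] (M : Matrix n n ℂ) (r : ℝ) : Matrix n n ℂ :=
  if h : M.IsHermitian then
    (h.eigenvectorUnitary : Matrix n n ℂ) *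
      Matrix.diagonal (fun i =>
        Complex.ofReal (if h.eigenvalues i = 0 then (0 : ℝ) else h.eigenvalues i ^ r)) *
      star (h.eigenvectorUnitary : Matrix n n ℂ)
  else 0

/-- `ρ_δ`: the matrix obtained from a Hermitian matrix by zeroing out a maximal set of
smallest eigenvalues whose sum is at most `δ` (ties between equal eigenvalues broken by a
fixed enumeration of the index type).  Junk value `0` on non-Hermitian input. -/
def dTrunc {n : Type*} [Fintype n] [DecidableEq n] (M : Matrix n n ℂ) (δ : ℝ) :
    Matrix n n ℂ :=
  if h : M.IsHermitian then
    (h.eigenvectorUnitary : Matrix n n ℂ) *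
      Matrix.diagonal (fun i =>
        if (∑ j ∈ Finset.univ.filter (fun j =>
              h.eigenvalues j < h.eigenvalues i ∨
                (h.eigenvalues j = h.eigenvalues i ∧
                  Fintype.equivFin n j ≤ Fintype.equivFin n i)), h.eigenvalues j) ≤ δ
        then (0 : ℂ) else (h.eigenvalues i : ℂ)) *
      star (h.eigenvectorUnitary : Matrix n n ℂ)
  else 0

/-- Squared Schatten 2-norm `‖M‖₂² = Tr[MᴴM]`. -/
def sn2sq {n : Type*} [Fintype n] (M : Matrix n n ℂ) : ℝ := (Matrix.trace (Mᴴ * M)).re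

/-- Trace norm `‖M‖₁ = Tr √(MᴴM)`. -/
def traceNorm {n : Type*} [Fintype n] [DecidableEq n] (M : Matrix n n ℂ) : ℝ :=
  (Matrix.trace (mpow (Mᴴ * M) (1 / 2))).re

/-- The conditioned state `(I ⊗ (ρ^B_δ)^{-1/4}) ρ^{AB} (I ⊗ (ρ^B_δ)^{-1/4})`. -/
def tildeCond {A B : Type*} [Fintype A] [DecidableEq A] [Fintype B] [DecidableEq B]
    (ρ : Matrix (A × B) (A × B) ℂ) (δ : ℝ) : Matrix (A × B) (A × B) ℂ :=
  ((1 : Matrix A A ℂ) ⊗ₖ mpow (dTrunc (ptL ρ) δ) (-(1 / 4))) * ρ *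
    ((1 : Matrix A A ℂ) ⊗ₖ mpow (dTrunc (ptL ρ) δ) (-(1 / 4)))

/-- The δ-tilde conditional 2-entropy `H̃_{2,δ}(A|B)_ρ` of a state on `A ⊗ B`
(conditioning on the second factor). -/
def tildeH2 {A B : Type*} [Fintype A] [DecidableEq A] [Fintype B] [DecidableEq B]
    (ρ : Matrix (A × B) (A × B) ℂ) (δ : ℝ) : ℝ :=
  - Real.logb 2 ((Matrix.trace (tildeCond ρ δ * tildeCond ρ δ)).re)

/-- The unconditional tilde 2-entropy `H̃_2(A)_σ = -log Tr[σ²]`. -/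
def h2un {A : Type*} [Fintype A] (σ : Matrix A A ℂ) : ℝ :=
  - Real.logb 2 ((Matrix.trace (σ * σ)).re)

/-- The max entropy `H_max(A)_σ = 2 log Tr[√σ]`. -/
def hMax {A : Type*} [Fintype A] [DecidableEq A] (σ : Matrix A A ℂ) : ℝ :=
  2 * Real.logb 2 ((Matrix.trace (mpow σ (1 / 2))).re)

/-- The maximally entangled state `Φ^{AA'}`. -/
def maxEnt (A : Type*) [Fintype A] [DecidableEq A] : Matrix (A × A) (A × A) ℂ :=
  fun p q => if p.1 = p.2 ∧ q.1 = q.2 then (Fintype.card A : ℂ)⁻¹ else 0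

/-- The swap operator `F^{AA'}`. -/
def swapOp (A : Type*) [DecidableEq A] : Matrix (A × A) (A × A) ℂ :=
  fun p q => if p.1 = q.2 ∧ p.2 = q.1 then 1 else 0

/-- The Choi state of a superoperator, on `A ⊗ E`. -/
def choi {A E : Type*} [Fintype A] [DecidableEq A]
    (T : Matrix A A ℂ → Matrix E E ℂ) : Matrix (A × E) (A × E) ℂ :=
  fun p q => (Fintype.card A : ℂ)⁻¹ * T (Matrix.single p.1 q.1 1) p.2 q.2

/-- A (mixed) quantum state. -/
def IsState {A : Type*} [Fintype A] (ρ : Matrix A A ℂ) : Prop :=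
  ρ.PosSemidef ∧ ρ.trace = 1

/-- A pure quantum state (rank-one projection). -/
def IsPureState {A : Type*} [Fintype A] (ψ : Matrix A A ℂ) : Prop :=
  ψ.PosSemidef ∧ ψ * ψ = ψ ∧ ψ.trace = 1


/-- The Haar measure on the unitary group is a probability measure. -/
instance {n : Type*} [Fintype n] [DecidableEq n] : IsProbabilityMeasure (haarU n) :=
  ⟨Measure.haarMeasure_self⟩

/-- marginal over the middle factor: `((X × Y) × Z) ↦ (X × Z)`. -/
def m13 {X Y Z : Type*} [Fintype Y] (M : Matrix ((X × Y) × Z) ((X × Y) × Z) ℂ) :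
    Matrix (X × Z) (X × Z) ℂ :=
  fun p q => ∑ y, M ((p.1, y), p.2) ((q.1, y), q.2)

/-- marginal over the first of three factors: `((X × Y) × Z) ↦ (Y × Z)`. -/
def m23 {X Y Z : Type*} [Fintype X] (M : Matrix ((X × Y) × Z) ((X × Y) × Z) ℂ) :
    Matrix (Y × Z) (Y × Z) ℂ :=
  fun p q => ∑ x, M ((x, p.1), p.2) ((x, q.1), q.2)

/-- marginal over the first component of the second factor:
`(X × (Y × Z)) ↦ (X × Z)`. -/
def m2of2 {X Y Z : Type*} [Fintype Y] (M : Matrix (X × (Y × Z)) (X × (Y × Z)) ℂ) :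
    Matrix (X × Z) (X × Z) ℂ :=
  fun p q => ∑ y, M (p.1, (y, p.2)) (q.1, (y, q.2))

/-- `(F^{AA'})^b`: the swap operator if `b = true`, the identity otherwise. -/
def swapPow (A : Type*) [Fintype A] [DecidableEq A] (b : Bool) : Matrix (A × A) (A × A) ℂ :=
  if b then swapOp A else 1

/-- `I_S ⊗ V` for a rectangular matrix `V`. -/
def idTensor {S α β : Type*} [DecidableEq S] (V : Matrix α β ℂ) :
    Matrix (S × α) (S × β) ℂ := fun p q => if p.1 = q.1 then V p.2 q.2 else 0

/-- `Ω^{A'A''} ⊗ Δ^{B'B''}` rearranged as an operator on `(A''⊗B'') ⊗ (A'⊗B')`. -/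
def pairState {A A' B B' : Type*} (Ω : Matrix (A' × A) (A' × A) ℂ)
    (Δ : Matrix (B' × B) (B' × B) ℂ) :
    Matrix ((A × B) × (A' × B')) ((A × B) × (A' × B')) ℂ :=
  fun p q => Ω (p.2.1, p.1.1) (q.2.1, q.1.1) * Δ (p.2.2, p.1.2) (q.2.2, q.1.2)

/-- interleave two bipartite operators on `A⊗X` and `B⊗Y` as an operator on
`(A⊗B) ⊗ (X⊗Y)`. -/
def arrange2 {A B X Y : Type*} (M : Matrix (A × X) (A × X) ℂ) (N : Matrix (B × Y) (B × Y) ℂ) :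
    Matrix ((A × B) × (X × Y)) ((A × B) × (X × Y)) ℂ :=
  fun p q => M (p.1.1, p.2.1) (q.1.1, q.2.1) * N (p.1.2, p.2.2) (q.1.2, q.2.2)

/-- conjugate the first factor of a bipartite operator by a rectangular matrix `U : A → A'`. -/
def encApply {A A' X : Type*} [Fintype A] (U : Matrix A' A ℂ) (M : Matrix (A × X) (A × X) ℂ) :
    Matrix (A' × X) (A' × X) ℂ :=
  fun p q => ∑ a, ∑ a', U p.1 a * M (a, p.2) (a', q.2) * star (U q.1 a')

section Pi

variable {k : ℕ} {a : Fin k → Type*} [∀ i, Fintype (a i)] [∀ i, DecidableEq (a i)]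

/-- Tensor product of `k` matrices. -/
def piKron (U : ∀ i, Matrix (a i) (a i) ℂ) : Matrix (∀ i, a i) (∀ i, a i) ℂ :=
  fun f g => ∏ i, U i (f i) (g i)

/-- merge assignments on the `true` and `false` fibers of a bit string into a full assignment. -/
def bmerge (b : Fin k → Bool) (f : (i : {i // b i = true}) → a i.1)
    (g : (i : {i // b i = false}) → a i.1) (i : Fin k) : a i :=
  if h : b i = true then f ⟨i, h⟩ else g ⟨i, by simpa using h⟩

/-- marginal of an operator on `(⊗ᵢ Aᵢ) ⊗ E` on the subsystem
`(⊗_{i : bᵢ = 1} Aᵢ) ⊗ E` selected by a bit string `b`. -/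
def margB {E : Type*} (b : Fin k → Bool)
    (M : Matrix ((∀ i, a i) × E) ((∀ i, a i) × E) ℂ) :
    Matrix (((i : {i // b i = true}) → a i.1) × E) (((i : {i // b i = true}) → a i.1) × E) ℂ :=
  fun p q => ∑ g : (i : {i // b i = false}) → a i.1,
    M (bmerge b p.1 g, p.2) (bmerge b q.1 g, q.2)

/-- `⊗ᵢ (F^{AᵢAᵢ'})^{bᵢ}` as an operator on `(⊗ᵢAᵢ) ⊗ (⊗ᵢAᵢ')`. -/
def swapProd (b : Fin k → Bool) :
    Matrix ((∀ i, a i) × (∀ i, a i)) ((∀ i, a i) × (∀ i, a i)) ℂ :=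
  fun p q => ∏ i, if b i
    then (if p.1 i = q.2 i ∧ p.2 i = q.1 i then (1 : ℂ) else 0)
    else (if p.1 i = q.1 i ∧ p.2 i = q.2 i then (1 : ℂ) else 0)

end Pi

/-- Tensor product `S ⊗ T` of two superoperators. -/
def tensorSup {α β α' β' : Type*} [Fintype α] [DecidableEq α] [Fintype α'] [DecidableEq α']
    (S : Matrix α α ℂ → Matrix β β ℂ) (T : Matrix α' α' ℂ → Matrix β' β' ℂ)
    (M : Matrix (α × α') (α × α') ℂ) : Matrix (β × β') (β × β') ℂ :=
  fun p q => ∑ x : α, ∑ y : α, ∑ x' : α', ∑ y' : α',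
    M (x, x') (y, y') * S (Matrix.single x y 1) p.1 q.1 *
      T (Matrix.single x' y' 1) p.2 q.2

/-- Hilbert–Schmidt adjoint of a superoperator. -/
def hsAdj {A E : Type*} [Fintype A] [DecidableEq A] [Fintype E]
    (T : Matrix A A ℂ → Matrix E E ℂ) (Y : Matrix E E ℂ) : Matrix A A ℂ :=
  fun x y => star (Matrix.trace (Yᴴ * T (Matrix.single x y 1)))

end Defs

end QIT

/-!
The kernel is `(∏ᵢ dᵢ)` times the Kronecker product of the `2 × 2` matrices `[[dᵢ, 1], [1, dᵢ]]`,
whose inverses are `[[dᵢ, -1], [-1, dᵢ]] / (dᵢ² - 1)`. Inverting factorwise gives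
`α_a = (∏ᵢ dᵢ) Σ_b (∏ᵢ cᵢ(aᵢ, bᵢ)) w_b` with `|cᵢ(x, y)|` equal to `dᵢ / (dᵢ² - 1)` or
`1 / (dᵢ² - 1)` according as `x = y` or not. Flipping the bits of `b` one at a time shows
`w_b ≤ (∏_{bᵢ ≠ aᵢ} dᵢ) w_a`, which exactly compensates the smaller coefficients: each of the
`2^k` terms is at most `(∏ᵢ dᵢ / (dᵢ² - 1)) w_a`.
-/

namespace Matrix

variable {ι β R : Type*} [Fintype ι] [CommSemiring R]

def piKronecker (M : ι → Matrix β β R) : Matrix (ι → β) (ι → β) R :=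
  fun b a => ∏ i, M i (b i) (a i)

theorem piKronecker_one [DecidableEq β] :
    piKronecker (fun _ : ι => (1 : Matrix β β R)) = 1 := by
  ext b a
  simp only [piKronecker, one_apply, Fintype.prod_boole, funext_iff]

theorem piKronecker_mul_piKronecker [DecidableEq ι] [Fintype β] (M N : ι → Matrix β β R) :
    piKronecker M * piKronecker N = piKronecker fun i => M i * N i := by
  ext b a
  simp only [mul_apply, piKronecker, ← Finset.prod_mul_distrib]
  exact (Fintype.prod_sum fun i j => M i (b i) j * N i j (a i)).symm

end Matrix

theorem le_prod_mul_of_le_mul_update {ι : Type*} [Fintype ι] [DecidableEq ι]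
    {w : (ι → Bool) → ℝ} {c : ι → ℝ} (hc : ∀ i, 0 ≤ c i)
    (hw : ∀ b i, w b ≤ c i * w (Function.update b i (!b i))) (b b' : ι → Bool) :
    w b ≤ (∏ i, if b i = b' i then 1 else c i) * w b' := by
  suffices ∀ s : Finset ι, ∀ b, (∀ i ∉ s, b i = b' i) →
      w b ≤ (∏ i ∈ s, if b i = b' i then 1 else c i) * w b' from
    this Finset.univ b fun i hi => absurd (Finset.mem_univ i) hi
  intro s
  induction s using Finset.induction_on with
  | empty =>
    intro b hb
    rw [funext fun i => hb i (Finset.notMem_empty i), Finset.prod_empty, one_mul]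
  | insert i s hi ih =>
    intro b hb
    have hb_off : ∀ j ∉ s, j ≠ i → b j = b' j := fun j hj hji =>
      hb j (by simp [hj, hji])
    rw [Finset.prod_insert hi]
    by_cases hbi : b i = b' i
    · rw [if_pos hbi, one_mul]
      refine ih b fun j hj => ?_
      rcases eq_or_ne j i with rfl | hji
      exacts [hbi, hb_off j hj hji]
    · have hb₁ : ∀ j ≠ i, Function.update b i (!b i) j = b j := fun j hji =>
        Function.update_of_ne hji _ _
      have hb₁_le : w (Function.update b i (!b i)) ≤
          (∏ j ∈ s, if b j = b' j then 1 else c j) * w b' := by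
        have hprod : ∏ j ∈ s, (if Function.update b i (!b i) j = b' j then 1 else c j) =
            ∏ j ∈ s, if b j = b' j then 1 else c j :=
          Finset.prod_congr rfl fun j hj => by rw [hb₁ j (ne_of_mem_of_not_mem hj hi)]
        rw [← hprod]
        refine ih _ fun j hj => ?_
        rcases eq_or_ne j i with rfl | hji
        · rw [Function.update_self]
          exact (Bool.eq_not_iff.mpr (Ne.symm hbi)).symm
        · rw [hb₁ j hji, hb_off j hj hji]
      calc w b ≤ c i * w (Function.update b i (!b i)) := hw b i
        _ ≤ c i * ((∏ j ∈ s, if b j = b' j then 1 else c j) * w b') :=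
          mul_le_mul_of_nonneg_left hb₁_le (hc i)
        _ = _ := by rw [if_neg hbi, mul_assoc]

def twirlFactor (d : ℝ) : Matrix Bool Bool ℝ := fun x y => if x = y then d else 1

def twirlFactorInv (d : ℝ) : Matrix Bool Bool ℝ :=
  fun x y => (if x = y then d else -1) / (d ^ 2 - 1)

theorem twirlFactorInv_mul_twirlFactor {d : ℝ} (hd : d ^ 2 ≠ 1) :
    twirlFactorInv d * twirlFactor d = 1 := by
  have : d ^ 2 - 1 ≠ 0 := sub_ne_zero.mpr hd
  ext x y
  cases x <;> cases y <;> simp [mul_apply, twirlFactor, twirlFactorInv] <;> field_simp <;> ring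

theorem abs_twirlFactorInv_mul {d : ℝ} (hd : 1 < d) (x y : Bool) :
    |twirlFactorInv d x y| * (if y = x then 1 else d) = d / (d ^ 2 - 1) := by
  have hd2 : 0 < d ^ 2 - 1 := by nlinarith
  cases x <;> cases y <;>
    simp [twirlFactorInv, abs_div, abs_of_pos hd2, abs_of_pos (zero_lt_one.trans hd)] <;> ring

theorem piKronecker_twirlFactorInv_mul_le {ι : Type*} [Fintype ι] [DecidableEq ι]
    {d : ι → ℝ} (hd : ∀ i, 1 < d i) {w : (ι → Bool) → ℝ} (hw0 : ∀ b, 0 ≤ w b)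
    (hw : ∀ b i, w b ≤ d i * w (Function.update b i (!b i))) (a b : ι → Bool) :
    piKronecker (fun i => twirlFactorInv (d i)) a b * w b ≤
      (∏ i, d i / (d i ^ 2 - 1)) * w a := by
  set q := ∏ i, twirlFactorInv (d i) (a i) (b i)
  calc q * w b ≤ |q| * w b := mul_le_mul_of_nonneg_right (le_abs_self q) (hw0 b)
    _ ≤ |q| * ((∏ i, if b i = a i then 1 else d i) * w a) :=
      mul_le_mul_of_nonneg_left
        (le_prod_mul_of_le_mul_update (fun i => (zero_lt_one.trans (hd i)).le) hw b a)
        (abs_nonneg q)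
    _ = (∏ i, d i / (d i ^ 2 - 1)) * w a := by
      rw [← mul_assoc, Finset.abs_prod, ← Finset.prod_mul_distrib]
      simp_rw [abs_twirlFactorInv_mul (hd _)]

theorem ksender_twirl_coeff_bound_nonzero_general {k : ℕ} (d : Fin k → ℝ) (hd : ∀ i, 2 ≤ d i)
    (w : (Fin k → Bool) → ℝ) (hw0 : ∀ b, 0 ≤ w b)
    (hw : ∀ (b : Fin k → Bool) (i : Fin k),
      w b / d i ≤ w (Function.update b i (!b i)) ∧
        w (Function.update b i (!b i)) ≤ d i * w b)
    (α : (Fin k → Bool) → ℝ)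
    (hα : ∀ b : Fin k → Bool,
      ∑ a : Fin k → Bool, ((∏ i, d i) * ∏ i, if b i = a i then d i else 1) * α a
        = (∏ i, d i) ^ 2 * w b)
    (a : Fin k → Bool) :
    α a ≤ (2 : ℝ) ^ k * ((∏ i, d i ^ 2) / ∏ i, (d i ^ 2 - 1)) * w a := by
  have hd1 : ∀ i, 1 < d i := fun i => one_lt_two.trans_le (hd i)
  set D := ∏ i, d i
  have hD : 0 < D := Finset.prod_pos fun i _ => zero_lt_one.trans (hd1 i)
  set P := piKronecker fun i => twirlFactor (d i)
  set Q := piKronecker fun i => twirlFactorInv (d i)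
  have hQP : Q * P = 1 := by
    simp_rw [Q, P, piKronecker_mul_piKronecker,
      twirlFactorInv_mul_twirlFactor (one_lt_pow₀ (hd1 _) two_ne_zero).ne',
      piKronecker_one]
  have hPα : P *ᵥ α = D • w := funext fun b => mul_left_cancel₀ hD.ne' <| by
    simpa [P, piKronecker, twirlFactor, mulVec, dotProduct, Finset.mul_sum, mul_assoc, sq]
      using hα b
  have hα_eq : α = D • (Q *ᵥ w) := by
    rw [← one_mulVec α, ← hQP, ← mulVec_mulVec, hPα, mulVec_smul]
  have hw_flip : ∀ b i, w b ≤ d i * w (Function.update b i (!b i)) := fun b i =>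
    (div_le_iff₀' (zero_lt_one.trans (hd1 i))).mp (hw b i).1
  calc α a = D * ∑ b, Q a b * w b := by rw [hα_eq]; rfl
    _ ≤ D * ∑ _b : Fin k → Bool, (∏ i, d i / (d i ^ 2 - 1)) * w a :=
      mul_le_mul_of_nonneg_left (Finset.sum_le_sum fun b _ =>
        piKronecker_twirlFactorInv_mul_le hd1 hw0 hw_flip a b) hD.le
    _ = (2 : ℝ) ^ k * ((∏ i, d i ^ 2) / ∏ i, (d i ^ 2 - 1)) * w a := by
      have hprod : (∏ i, d i ^ 2) / ∏ i, (d i ^ 2 - 1) = D * ∏ i, d i / (d i ^ 2 - 1) := by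
        simp_rw [D, ← Finset.prod_div_distrib, ← Finset.prod_mul_distrib, mul_div_assoc', sq]
      rw [hprod, Finset.sum_const, Finset.card_univ, Fintype.card_fun, Fintype.card_bool,
        Fintype.card_fin, nsmul_eq_mul]
      push_cast
      ring

/-- Coefficient bound for the k-sender twirl, nonzero index: if `α` solves
`Σ_a K_{b,a} α_a = (∏ᵢdᵢ)² w_b` with `K_{b,a} = (∏ᵢdᵢ)·∏ᵢ dᵢ^{¬(bᵢ⊕aᵢ)}`, `dᵢ ≥ 2`, and
`w` satisfies `w_b/dᵢ ≤ w_{b⊕eᵢ} ≤ dᵢ w_b`, then for every `a ≠ 0^k`,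
`α_a ≤ 2^k · (∏ᵢdᵢ²/∏ᵢ(dᵢ²−1)) · w_a`. -/
theorem ksender_twirl_coeff_bound_nonzero {k : ℕ} (d : Fin k → ℝ) (hd : ∀ i, 2 ≤ d i)
    (w : (Fin k → Bool) → ℝ) (hw0 : ∀ b, 0 ≤ w b)
    (hw : ∀ (b : Fin k → Bool) (i : Fin k),
      w b / d i ≤ w (Function.update b i (!b i)) ∧
        w (Function.update b i (!b i)) ≤ d i * w b)
    (α : (Fin k → Bool) → ℝ)
    (hα : ∀ b : Fin k → Bool,
      ∑ a : Fin k → Bool, ((∏ i, d i) * ∏ i, if b i = a i then d i else 1) * α a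
        = (∏ i, d i) ^ 2 * w b)
    (a : Fin k → Bool) (ha : a ≠ fun _ => false) :
    α a ≤ (2 : ℝ) ^ k * ((∏ i, d i ^ 2) / ∏ i, (d i ^ 2 - 1)) * w a :=
  ksender_twirl_coeff_bound_nonzero_general d hd w hw0 hw α hα a
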